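/- Let η : ℝ → ℝ be continuously differentiable with η > 0 on [0,L₁], let u : ℝ² → ℝ² be continuously differentiable, and let q : ℝ² → ℝ be continuous. Then ∫_{Ω_η} q(x)·(div u)(x) dλ²(x) = ∫_{Ω̂} q(A_η(x̂)) · ( D(u∘A_η)(x̂) : M(η)(x̂) ) dλ²(x̂). -/

import Mathlib

open MeasureTheory

/-- The subgraph domain `Ω_η = {(x₁,x₂) : x₁ ∈ (0,L₁), 0 < x₂ < η(x₁)}`. -/
def subgraph (L₁ : ℝ) (η : ℝ → ℝ) : Set (ℝ × ℝ) :=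
  {p : ℝ × ℝ | p.1 ∈ Set.Ioo 0 L₁ ∧ p.2 ∈ Set.Ioo 0 (η p.1)}

/-- The reference domain `Ω̂ = (0,L₁) × (0,1)`. -/
def refDomain (L₁ : ℝ) : Set (ℝ × ℝ) := Set.Ioo 0 L₁ ×ˢ Set.Ioo (0 : ℝ) 1

/-- The ALE map `A_η(x̂₁,x̂₂) = (x̂₁, η(x̂₁)·x̂₂)`. -/
def aleMap (η : ℝ → ℝ) (x : ℝ × ℝ) : ℝ × ℝ := (x.1, η x.1 * x.2)

/-- The Jacobian matrix `(Du)_{ij} = ∂_j u_i` of a map `u : ℝ² → ℝ²`. -/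
noncomputable def jac (u : ℝ × ℝ → ℝ × ℝ) (x : ℝ × ℝ) : Matrix (Fin 2) (Fin 2) ℝ :=
  !![(fderiv ℝ u x (1, 0)).1, (fderiv ℝ u x (0, 1)).1;
     (fderiv ℝ u x (1, 0)).2, (fderiv ℝ u x (0, 1)).2]

/-- The divergence `div u = tr(Du)`. -/
noncomputable def divg (u : ℝ × ℝ → ℝ × ℝ) (x : ℝ × ℝ) : ℝ :=
  (fderiv ℝ u x (1, 0)).1 + (fderiv ℝ u x (0, 1)).2

/-- The matrix `M(η)(x̂) = η(x̂₁)·F(η)(x̂)^{-T}`, with rows `(η(x̂₁), −x̂₂·η′(x̂₁))`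
and `(0, 1)`. -/
noncomputable def matM (η : ℝ → ℝ) (x : ℝ × ℝ) : Matrix (Fin 2) (Fin 2) ℝ :=
  !![η x.1, -(x.2 * deriv η x.1); 0, 1]

/-- The Frobenius contraction `A : B = Σ_{i,j} A_{ij} B_{ij}`. -/
def frob (A B : Matrix (Fin 2) (Fin 2) ℝ) : ℝ := ∑ i, ∑ j, A i j * B i j

/-- Derivative of the ALE map. -/
noncomputable def aleDeriv (η : ℝ → ℝ) (x : ℝ × ℝ) : (ℝ × ℝ) →L[ℝ] (ℝ × ℝ) :=
  (ContinuousLinearMap.fst ℝ ℝ ℝ).prod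
    (η x.1 • ContinuousLinearMap.snd ℝ ℝ ℝ +
      x.2 • (deriv η x.1 • ContinuousLinearMap.fst ℝ ℝ ℝ))

lemma aleDeriv_apply (η : ℝ → ℝ) (x v : ℝ × ℝ) :
    aleDeriv η x v = (v.1, η x.1 * v.2 + x.2 * (deriv η x.1 * v.1)) := by
  simp [aleDeriv, smul_eq_mul]

lemma hasFDerivAt_aleMap (η : ℝ → ℝ) (hη : ContDiff ℝ 1 η) (x : ℝ × ℝ) :
    HasFDerivAt (aleMap η) (aleDeriv η x) x := by
  have h1 : HasFDerivAt (fun p : ℝ × ℝ => p.1) (ContinuousLinearMap.fst ℝ ℝ ℝ) x :=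
    hasFDerivAt_fst
  have hd : HasDerivAt η (deriv η x.1) x.1 :=
    (hη.differentiable one_ne_zero x.1).hasDerivAt
  have hη1 : HasFDerivAt (fun p : ℝ × ℝ => η p.1)
      (deriv η x.1 • ContinuousLinearMap.fst ℝ ℝ ℝ) x :=
    hd.comp_hasFDerivAt x h1
  have h2 : HasFDerivAt (fun p : ℝ × ℝ => p.2) (ContinuousLinearMap.snd ℝ ℝ ℝ) x :=
    hasFDerivAt_snd
  exact h1.prodMk (hη1.mul h2)

lemma aleDeriv_det (η : ℝ → ℝ) (x : ℝ × ℝ) : (aleDeriv η x).det = η x.1 := by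
  have : (aleDeriv η x).det =
      LinearMap.det ((aleDeriv η x) : (ℝ × ℝ) →ₗ[ℝ] (ℝ × ℝ)) := rfl
  rw [this, ← LinearMap.det_toMatrix (Module.Basis.finTwoProd ℝ), Matrix.det_fin_two]
  simp [LinearMap.toMatrix_apply, aleDeriv_apply]

/-- Transformation of the weak divergence constraint onto the
reference domain: `∫_{Ω_η} q · div u dx = ∫_{Ω̂} q∘A_η · (D(u∘A_η) : M(η)) dx̂`
(cf. \eqref{wf1_ref} in Lemma on the weak formulation on the reference domain). -/
theorem divergence_constraint_on_reference_domain
    (L₁ : ℝ) (hL : 0 < L₁)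
    (η : ℝ → ℝ) (hη : ContDiff ℝ 1 η) (hpos : ∀ x₁ ∈ Set.Icc (0 : ℝ) L₁, 0 < η x₁)
    (u : ℝ × ℝ → ℝ × ℝ) (hu : ContDiff ℝ 1 u)
    (q : ℝ × ℝ → ℝ) (hq : Continuous q) :
    ∫ x in subgraph L₁ η, q x * divg u x
      = ∫ xh in refDomain L₁, q (aleMap η xh) * frob (jac (u ∘ aleMap η) xh) (matM η xh) := by
  have hmeas : MeasurableSet (refDomain L₁) :=
    measurableSet_Ioo.prod measurableSet_Ioo
  have himg : aleMap η '' refDomain L₁ = subgraph L₁ η := by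
    ext p
    constructor
    · rintro ⟨⟨x₁, x₂⟩, ⟨hx1, hx2⟩, rfl⟩
      have hpx : 0 < η x₁ := hpos x₁ ⟨le_of_lt hx1.1, le_of_lt hx1.2⟩
      refine ⟨hx1, ?_, ?_⟩
      · exact mul_pos hpx hx2.1
      · simpa [aleMap] using (mul_lt_of_lt_one_right hpx hx2.2)
    · rintro ⟨h1, h2⟩
      have hpx : 0 < η p.1 := hpos p.1 ⟨le_of_lt h1.1, le_of_lt h1.2⟩
      refine ⟨(p.1, p.2 / η p.1), ⟨h1, ?_, ?_⟩, ?_⟩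
      · exact div_pos h2.1 hpx
      · exact (div_lt_one hpx).2 h2.2
      · simp [aleMap, mul_div_cancel₀ _ hpx.ne']
  have hinj : Set.InjOn (aleMap η) (refDomain L₁) := by
    rintro ⟨x₁, x₂⟩ ⟨hx1, _⟩ ⟨y₁, y₂⟩ _ h
    have h1 : x₁ = y₁ := congrArg Prod.fst h
    have hpx : 0 < η x₁ := hpos x₁ ⟨le_of_lt hx1.1, le_of_lt hx1.2⟩
    have h2 : η x₁ * x₂ = η x₁ * y₂ := by
      have := congrArg Prod.snd h
      simpa [aleMap, h1] using this
    have : x₂ = y₂ := mul_left_cancel₀ hpx.ne' h2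
    simp [h1, this]
  have hfd : ∀ x ∈ refDomain L₁,
      HasFDerivWithinAt (aleMap η) (aleDeriv η x) (refDomain L₁) x :=
    fun x _ => (hasFDerivAt_aleMap η hη x).hasFDerivWithinAt
  rw [← himg,
    integral_image_eq_integral_abs_det_fderiv_smul volume hmeas hfd hinj
      (fun x => q x * divg u x)]
  apply setIntegral_congr_fun hmeas
  rintro x hx
  have hpx : 0 < η x.1 := hpos x.1 ⟨le_of_lt hx.1.1, le_of_lt hx.1.2⟩
  have hdet : |(aleDeriv η x).det| = η x.1 := by
    rw [aleDeriv_det]; exact abs_of_pos hpx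
  have hcomp : fderiv ℝ (u ∘ aleMap η) x
      = (fderiv ℝ u (aleMap η x)).comp (aleDeriv η x) := by
    have hA := hasFDerivAt_aleMap η hη x
    have hU : HasFDerivAt u (fderiv ℝ u (aleMap η x)) (aleMap η x) :=
      (hu.differentiable one_ne_zero (aleMap η x)).hasFDerivAt
    exact (hU.comp x hA).fderiv
  set D := fderiv ℝ u (aleMap η x) with hD
  have hv1 : fderiv ℝ (u ∘ aleMap η) x (1, 0)
      = D (1, 0) + (x.2 * deriv η x.1) • D (0, 1) := by
    rw [hcomp, ContinuousLinearMap.comp_apply, aleDeriv_apply]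
    have : ((1 : ℝ), η x.1 * 0 + x.2 * (deriv η x.1 * 1))
        = (1, 0) + (x.2 * deriv η x.1) • ((0 : ℝ), (1 : ℝ)) := by
      simp [Prod.ext_iff]
    rw [this, map_add, ContinuousLinearMap.map_smul]
  have hv2 : fderiv ℝ (u ∘ aleMap η) x (0, 1) = η x.1 • D (0, 1) := by
    rw [hcomp, ContinuousLinearMap.comp_apply, aleDeriv_apply]
    have : ((0 : ℝ), η x.1 * 1 + x.2 * (deriv η x.1 * 0))
        = η x.1 • ((0 : ℝ), (1 : ℝ)) := by
      simp [Prod.ext_iff]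
    rw [this, ContinuousLinearMap.map_smul]
  have hfrob : frob (jac (u ∘ aleMap η) x) (matM η x) = η x.1 * divg u (aleMap η x) := by
    simp only [frob, jac, matM, divg, Fin.sum_univ_two]
    simp only [Matrix.cons_val', Matrix.cons_val_zero, Matrix.cons_val_one, Matrix.head_cons,
      Matrix.empty_val', Matrix.cons_val_fin_one, Matrix.head_fin_const, Matrix.of_apply]
    simp only [hv1, hv2, Prod.fst_add, Prod.snd_add, Prod.smul_fst, Prod.smul_snd,
      smul_eq_mul, ← hD]
    ring
  simp only [hdet, hfrob, smul_eq_mul]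
  ring
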